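/- Let K be a field with char K ≠ 2 and let 𝔤 be a finitely generated Lie algebra over K. Then the ideal L(𝔤) of χ(𝔤) is finitely generated as a Lie algebra. -/

import Mathlib

/- Formalization of a statement from "Weak commutativity for Lie algebras"
   (arXiv:1808.10303). All Lie algebras are over a fixed field `K` with `char K ≠ 2`. -/

universe u v w

set_option linter.unusedVariables false

section WeakCommutativity

variable (K : Type u) [Field K] (g : Type v) [LieRing g] [LieAlgebra K g]

/-- The image of `x ∈ g` (first copy) in the free Lie algebra on two copies of `g`. -/
noncomputable def ofl (x : g) : FreeLieAlgebra K (g ⊕ g) := FreeLieAlgebra.of K (Sum.inl x)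

/-- The image of `xᵠ ∈ gᵠ` (second copy) in the free Lie algebra on two copies of `g`. -/
noncomputable def ofr (x : g) : FreeLieAlgebra K (g ⊕ g) := FreeLieAlgebra.of K (Sum.inr x)

/-- Relators presenting `χ(g)` as a quotient of the free Lie algebra on the disjoint union of
two copies of (the underlying type of) `g`: the relations presenting the free Lie product
(coproduct) of `g` and its copy `gᵠ`, together with the weak commutativity relations
`⁅x, xᵠ⁆ = 0` for all `x ∈ g`. -/
def chiRelators : Set (FreeLieAlgebra K (g ⊕ g)) :=
  { z | (∃ x y : g, z = ofl K g (x + y) - ofl K g x - ofl K g y)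
      ∨ (∃ (c : K) (x : g), z = ofl K g (c • x) - c • ofl K g x)
      ∨ (∃ x y : g, z = ofl K g ⁅x, y⁆ - ⁅ofl K g x, ofl K g y⁆)
      ∨ (∃ x y : g, z = ofr K g (x + y) - ofr K g x - ofr K g y)
      ∨ (∃ (c : K) (x : g), z = ofr K g (c • x) - c • ofr K g x)
      ∨ (∃ x y : g, z = ofr K g ⁅x, y⁆ - ⁅ofr K g x, ofr K g y⁆)
      ∨ (∃ x : g, z = ⁅ofl K g x, ofr K g x⁆) }

/-- The ideal of relations defining `χ(g)`. -/
noncomputable def chiIdeal : LieIdeal K (FreeLieAlgebra K (g ⊕ g)) :=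
  LieSubmodule.lieSpan K (FreeLieAlgebra K (g ⊕ g)) (chiRelators K g)

/-- Sidki's weak commutativity Lie algebra `χ(g)`: the quotient of the free Lie product of
two isomorphic copies `g`, `gᵠ` of `g` by the ideal generated by the brackets `⁅x, xᵠ⁆`. -/
abbrev chi : Type (max u v) := FreeLieAlgebra K (g ⊕ g) ⧸ chiIdeal K g

/-- The canonical image of `x ∈ g` (first copy) in `χ(g)`. -/
noncomputable def chiι (x : g) : chi K g :=
  LieSubmodule.Quotient.mk (N := chiIdeal K g) (ofl K g x)

/-- The canonical image of `xᵠ` (the second copy of `x ∈ g`) in `χ(g)`. -/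
noncomputable def chiψ (x : g) : chi K g :=
  LieSubmodule.Quotient.mk (N := chiIdeal K g) (ofr K g x)

/-- The ideal `L(g) ⊆ χ(g)`, generated by the elements `x - xᵠ` for `x ∈ g`. -/
noncomputable def chiL : LieIdeal K (chi K g) :=
  LieSubmodule.lieSpan K (chi K g) (Set.range fun x : g => chiι K g x - chiψ K g x)

end WeakCommutativity

/-! Write `D x = x - xᵠ` and let `s` generate `g`. The Lie subalgebra `B` generated by the
`D y` and `⁅x, D y⁆` with `x, y ∈ s` is already an ideal of `χ(g)`, so it equals `L(g)`.
Weak commutativity makes `⁅x, D y⁆` antisymmetric in `x, y` and gives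
`D⁅x, y⁆ = 2⁅x, D y⁆ - ⁅D x, D y⁆`; with the Jacobi identity these express
`4⁅x, ⁅y, D z⁆⁆` through brackets `⁅x, ⁅D y, D z⁆⁆ ∈ B`, so `ad x` preserves `B` for `x ∈ s`
once `2` is invertible. The `x ∈ g` with `D x ∈ B` and `⁅x, B⁆ ⊆ B` then form a subalgebra,
hence all of `g`, and as `xᵠ = x - D x`, every generator of `χ(g)` normalizes `B`.
The argument works for any two Lie algebra maps `g → A` with `⁅x, xᵠ⁆ = 0` generating `A`. -/

namespace LieSubalgebra

variable {R L : Type*} [CommRing R] [LieRing L] [LieAlgebra R L]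

theorem mem_normalizer_lieSpan_iff {s : Set L} {a : L} :
    a ∈ (lieSpan R L s).normalizer ↔ ∀ y ∈ s, ⁅a, y⁆ ∈ lieSpan R L s := by
  refine ⟨fun h y hy => (mem_normalizer_iff _ a).1 h y (subset_lieSpan hy), fun h => ?_⟩
  rw [mem_normalizer_iff]
  intro b hb
  induction hb using lieSpan_induction with
  | mem y hy => exact h y hy
  | zero => simp
  | add _ _ _ _ hx hy => rw [lie_add]; exact add_mem hx hy
  | smul r _ _ hx => rw [lie_smul]; exact LieSubalgebra.smul_mem _ r hx
  | lie x y hx' hy' hx hy =>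
    rw [leibniz_lie]; exact add_mem (lie_mem _ hx hy') (lie_mem _ hx' hy)

end LieSubalgebra

theorem FreeLieAlgebra.lieSpan_range_of (R X : Type*) [CommRing R] :
    LieSubalgebra.lieSpan R (FreeLieAlgebra R X) (Set.range (of R)) = ⊤ := by
  set S := LieSubalgebra.lieSpan R (FreeLieAlgebra R X) (Set.range (of R))
  let f : FreeLieAlgebra R X →ₗ⁅R⁆ S :=
    lift R fun x => ⟨of R x, LieSubalgebra.subset_lieSpan ⟨x, rfl⟩⟩
  have hf : S.incl.comp f = LieHom.id := FreeLieAlgebra.hom_ext fun x => by simp [f]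
  refine eq_top_iff.2 fun z _ => ?_
  rw [← LieHom.id_apply (R := R) z, ← hf]
  exact (f z).2

namespace WeakComm

variable {K g A : Type*} [CommRing K] [LieRing g] [LieAlgebra K g] [LieRing A] [LieAlgebra K A]
  {ι ψ : g →ₗ⁅K⁆ A}

def diff (ι ψ : g →ₗ⁅K⁆ A) : g →ₗ[K] A := (ι : g →ₗ[K] A) - ψ

theorem diff_apply (x : g) : diff ι ψ x = ι x - ψ x := rfl

theorem lie_add_lie_eq_zero (hwc : ∀ x, ⁅ι x, ψ x⁆ = 0) (x y : g) :
    ⁅ι x, ψ y⁆ + ⁅ι y, ψ x⁆ = 0 := by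
  have h := hwc (x + y)
  simp only [map_add, add_lie, lie_add, hwc] at h
  rw [← h]; abel

theorem lie_diff_comm (hwc : ∀ x, ⁅ι x, ψ x⁆ = 0) (x y : g) :
    ⁅ι x, diff ι ψ y⁆ = -⁅ι y, diff ι ψ x⁆ := by
  have h := lie_add_lie_eq_zero hwc x y
  rw [diff_apply, diff_apply, lie_sub, lie_sub, ← lie_skew (ι y)]
  linear_combination (norm := module) -h

theorem diff_lie (hwc : ∀ x, ⁅ι x, ψ x⁆ = 0) (x y : g) :
    diff ι ψ ⁅x, y⁆ = (2 : K) • ⁅ι x, diff ι ψ y⁆ - ⁅diff ι ψ x, diff ι ψ y⁆ := by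
  have h := lie_add_lie_eq_zero hwc x y
  simp only [diff_apply, LieHom.map_lie, lie_sub, sub_lie, ← lie_skew (ψ x) (ι y)]
  linear_combination (norm := module) h

theorem lie_lie_diff_comm (hwc : ∀ x, ⁅ι x, ψ x⁆ = 0) (x y z : g) :
    ⁅ι x, ⁅ι y, diff ι ψ z⁆⁆ = -⁅ι x, ⁅ι z, diff ι ψ y⁆⁆ := by
  rw [lie_diff_comm hwc y z, lie_neg]

theorem lie_lie_diff_add_two_smul (hwc : ∀ x, ⁅ι x, ψ x⁆ = 0) (x y z : g) :
    ⁅ι x, ⁅ι y, diff ι ψ z⁆⁆ - ⁅ι y, ⁅ι x, diff ι ψ z⁆⁆ + (2 : K) • ⁅ι z, ⁅ι x, diff ι ψ y⁆⁆ =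
      ⁅ι z, ⁅diff ι ψ x, diff ι ψ y⁆⁆ := by
  have h₁ : ⁅ι ⁅x, y⁆, diff ι ψ z⁆ = ⁅ι x, ⁅ι y, diff ι ψ z⁆⁆ - ⁅ι y, ⁅ι x, diff ι ψ z⁆⁆ := by
    rw [LieHom.map_lie, lie_lie]
  have h₂ := lie_diff_comm hwc ⁅x, y⁆ z
  rw [diff_lie hwc, lie_sub, lie_smul, h₁] at h₂
  linear_combination (norm := module) h₂

theorem four_smul_lie_lie_diff (hwc : ∀ x, ⁅ι x, ψ x⁆ = 0) (x y z : g) :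
    (4 : K) • ⁅ι x, ⁅ι y, diff ι ψ z⁆⁆ = (3 : K) • ⁅ι x, ⁅diff ι ψ y, diff ι ψ z⁆⁆ -
      ⁅ι y, ⁅diff ι ψ z, diff ι ψ x⁆⁆ - ⁅ι z, ⁅diff ι ψ x, diff ι ψ y⁆⁆ := by
  have e₁ := lie_lie_diff_add_two_smul hwc x y z
  have e₂ := lie_lie_diff_add_two_smul hwc y z x
  have e₃ := lie_lie_diff_add_two_smul hwc z x y
  rw [lie_lie_diff_comm hwc y x z] at e₁
  rw [lie_lie_diff_comm hwc z y x] at e₂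
  rw [lie_lie_diff_comm hwc x z y] at e₃
  linear_combination (norm := module) (3 : K) • e₂ - e₁ - e₃

theorem lie_lie_diff_mem (h2 : IsUnit (2 : K)) (hwc : ∀ x, ⁅ι x, ψ x⁆ = 0)
    {B : LieSubalgebra K A} {s : Set g} (hD : ∀ x ∈ s, diff ι ψ x ∈ B)
    (hιD : ∀ x ∈ s, ∀ y ∈ s, ⁅ι x, diff ι ψ y⁆ ∈ B) {x y z : g} (hx : x ∈ s) (hy : y ∈ s)
    (hz : z ∈ s) : ⁅ι x, ⁅ι y, diff ι ψ z⁆⁆ ∈ B := by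
  have hQ : ∀ {a b c}, a ∈ s → b ∈ s → c ∈ s → ⁅ι a, ⁅diff ι ψ b, diff ι ψ c⁆⁆ ∈ B :=
    fun ha hb hc => by
      rw [leibniz_lie]
      exact add_mem (B.lie_mem (hιD _ ha _ hb) (hD _ hc)) (B.lie_mem (hD _ hb) (hιD _ ha _ hc))
  have h4 : IsUnit (4 : K) := by convert h2.mul h2; norm_num
  refine (Submodule.smul_mem_iff_of_isUnit B.toSubmodule h4).1 ?_
  rw [LieSubalgebra.mem_toSubmodule, four_smul_lie_lie_diff hwc]
  exact sub_mem (sub_mem (B.smul_mem _ (hQ hx hy hz)) (hQ hy hz hx)) (hQ hz hx hy)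

def generators (ι ψ : g →ₗ⁅K⁆ A) (s : Set g) : Set A :=
  diff ι ψ '' s ∪ Set.image2 (fun x y => ⁅ι x, diff ι ψ y⁆) s s

theorem finite_generators {s : Set g} (hs : s.Finite) : (generators ι ψ s).Finite :=
  (hs.image _).union (hs.image2 _ hs)

theorem mem_normalizer_lieSpan_generators (h2 : IsUnit (2 : K)) (hwc : ∀ x, ⁅ι x, ψ x⁆ = 0)
    {s : Set g} {x : g} (hx : x ∈ s) :
    ι x ∈ (LieSubalgebra.lieSpan K A (generators ι ψ s)).normalizer := by
  have hD : ∀ y ∈ s, diff ι ψ y ∈ LieSubalgebra.lieSpan K A (generators ι ψ s) :=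
    fun y hy => LieSubalgebra.subset_lieSpan (Or.inl ⟨y, hy, rfl⟩)
  have hιD :
      ∀ y ∈ s, ∀ z ∈ s, ⁅ι y, diff ι ψ z⁆ ∈ LieSubalgebra.lieSpan K A (generators ι ψ s) :=
    fun y hy z hz => LieSubalgebra.subset_lieSpan (Or.inr ⟨y, hy, z, hz, rfl⟩)
  rw [LieSubalgebra.mem_normalizer_lieSpan_iff]
  rintro _ (⟨y, hy, rfl⟩ | ⟨y, hy, z, hz, rfl⟩)
  · exact hιD x hx y hy
  · exact lie_lie_diff_mem h2 hwc hD hιD hx hy hz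

theorem diff_mem_and_mem_normalizer (hwc : ∀ x, ⁅ι x, ψ x⁆ = 0) {B : LieSubalgebra K A}
    {s : Set g} (hs : LieSubalgebra.lieSpan K g s = ⊤)
    (h : ∀ x ∈ s, diff ι ψ x ∈ B ∧ ι x ∈ B.normalizer) (x : g) :
    diff ι ψ x ∈ B ∧ ι x ∈ B.normalizer := by
  let C : LieSubalgebra K g :=
    { carrier := {x | diff ι ψ x ∈ B ∧ ι x ∈ B.normalizer}
      add_mem' := fun hx hy => by
        simp only [Set.mem_ofPred_eq, map_add] at *
        exact ⟨add_mem hx.1 hy.1, add_mem hx.2 hy.2⟩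
      zero_mem' := by simp only [Set.mem_ofPred_eq, map_zero]; exact ⟨zero_mem B, zero_mem _⟩
      smul_mem' := fun c x hx => by
        simp only [Set.mem_ofPred_eq, map_smul] at *
        exact ⟨B.smul_mem c hx.1, LieSubalgebra.smul_mem _ c hx.2⟩
      lie_mem' := fun {x y} hx hy => by
        simp only [Set.mem_ofPred_eq, diff_lie hwc, LieHom.map_lie] at *
        refine ⟨sub_mem (B.smul_mem _ ?_) (B.lie_mem hx.1 hy.1),
          LieSubalgebra.lie_mem _ hx.2 hy.2⟩
        exact (LieSubalgebra.mem_normalizer_iff B _).1 hx.2 _ hy.1 }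
  have hsC : LieSubalgebra.lieSpan K g s ≤ C := LieSubalgebra.lieSpan_le.2 h
  exact (hs ▸ hsC) (LieSubalgebra.mem_top x)

theorem coe_lieSpan_generators (h2 : IsUnit (2 : K)) (hwc : ∀ x, ⁅ι x, ψ x⁆ = 0)
    (hgen : LieSubalgebra.lieSpan K A (Set.range ι ∪ Set.range ψ) = ⊤) {s : Set g}
    (hs : LieSubalgebra.lieSpan K g s = ⊤) :
    (LieSubalgebra.lieSpan K A (generators ι ψ s) : Set A) =
      LieSubmodule.lieSpan K A (Set.range (diff ι ψ)) := by
  set B := LieSubalgebra.lieSpan K A (generators ι ψ s)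
  have hB : ∀ x, diff ι ψ x ∈ B ∧ ι x ∈ B.normalizer :=
    diff_mem_and_mem_normalizer hwc hs fun x hx =>
      ⟨LieSubalgebra.subset_lieSpan (Or.inl ⟨x, hx, rfl⟩),
        mem_normalizer_lieSpan_generators h2 hwc hx⟩
  have hψ (x : g) : ψ x ∈ B.normalizer := by
    have := sub_mem (hB x).2 (B.le_normalizer (hB x).1)
    rwa [diff_apply, sub_sub_cancel] at this
  have htop : B.normalizer = ⊤ := by
    refine eq_top_iff.2 (hgen ▸ LieSubalgebra.lieSpan_le.2 ?_)
    rintro _ (⟨x, rfl⟩ | ⟨x, rfl⟩)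
    exacts [(hB x).2, hψ x]
  obtain ⟨I, hI⟩ := (LieSubalgebra.exists_lieIdeal_coe_eq_iff (K := B)).2 fun a b hb =>
    (LieSubalgebra.mem_normalizer_iff B a).1 (htop ▸ LieSubalgebra.mem_top a) b hb
  have hI' : (I : Set A) = B := congrArg SetLike.coe hI
  apply Set.Subset.antisymm
  · refine LieSubalgebra.lieSpan_le
      (K := LieIdeal.toLieSubalgebra K A (LieSubmodule.lieSpan K A _)).2 ?_
    rintro _ (⟨x, -, rfl⟩ | ⟨x, -, y, -, rfl⟩)
    · exact LieSubmodule.subset_lieSpan ⟨x, rfl⟩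
    · exact LieSubmodule.lie_mem _ (LieSubmodule.subset_lieSpan ⟨y, rfl⟩)
  · rw [← hI', SetLike.coe_subset_coe, LieSubmodule.lieSpan_le, hI']
    rintro _ ⟨x, rfl⟩
    exact (hB x).1

end WeakComm

section Chi

variable (K : Type u) [Field K] (g : Type v) [LieRing g] [LieAlgebra K g]

noncomputable def chiMk : FreeLieAlgebra K (g ⊕ g) →ₗ⁅K⁆ chi K g :=
  { (chiIdeal K g).toSubmodule.mkQ with map_lie' := rfl }

variable {K g}

@[simp]
theorem chiMk_ofl (x : g) : chiMk K g (ofl K g x) = chiι K g x := rfl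

@[simp]
theorem chiMk_ofr (x : g) : chiMk K g (ofr K g x) = chiψ K g x := rfl

theorem chiMk_eq_zero {r : FreeLieAlgebra K (g ⊕ g)} (h : r ∈ chiRelators K g) :
    chiMk K g r = 0 :=
  LieSubmodule.Quotient.mk_eq_zero'.2 (LieSubmodule.subset_lieSpan h)

variable (K g)

noncomputable def chiιHom : g →ₗ⁅K⁆ chi K g where
  toFun := chiι K g
  map_add' x y := by
    simpa [sub_sub, sub_eq_zero] using chiMk_eq_zero (Or.inl ⟨x, y, rfl⟩)
  map_smul' c x := by
    simpa [sub_eq_zero] using chiMk_eq_zero (Or.inr (Or.inl ⟨c, x, rfl⟩))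
  map_lie' {x y} := by
    simpa [sub_eq_zero] using chiMk_eq_zero (Or.inr (Or.inr (Or.inl ⟨x, y, rfl⟩)))

noncomputable def chiψHom : g →ₗ⁅K⁆ chi K g where
  toFun := chiψ K g
  map_add' x y := by
    simpa [sub_sub, sub_eq_zero] using
      chiMk_eq_zero (Or.inr (Or.inr (Or.inr (Or.inl ⟨x, y, rfl⟩))))
  map_smul' c x := by
    simpa [sub_eq_zero] using
      chiMk_eq_zero (Or.inr (Or.inr (Or.inr (Or.inr (Or.inl ⟨c, x, rfl⟩)))))
  map_lie' {x y} := by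
    simpa [sub_eq_zero] using
      chiMk_eq_zero (Or.inr (Or.inr (Or.inr (Or.inr (Or.inr (Or.inl ⟨x, y, rfl⟩))))))

theorem chiιHom_lie_chiψHom_self (x : g) : ⁅chiιHom K g x, chiψHom K g x⁆ = 0 := by
  have h :=
    chiMk_eq_zero (K := K) (Or.inr (Or.inr (Or.inr (Or.inr (Or.inr (Or.inr ⟨x, rfl⟩))))))
  rw [LieHom.map_lie] at h
  exact h

theorem lieSpan_range_chiιHom_union_range_chiψHom_eq_top :
    LieSubalgebra.lieSpan K (chi K g) (Set.range (chiιHom K g) ∪ Set.range (chiψHom K g)) = ⊤ := by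
  have h := congrArg (LieSubalgebra.map (chiMk K g)) (FreeLieAlgebra.lieSpan_range_of K (g ⊕ g))
  rw [LieSubalgebra.map_lieSpan, ← Set.range_comp, Sum.range_eq, ← LieSubalgebra.map_top,
    (LieHom.range_eq_top _).2 (LieSubmodule.Quotient.surjective_mk' (chiIdeal K g))] at h
  exact h

end Chi

/-- If `g` is finitely generated, then the ideal `L(g)` of `χ(g)` is
finitely generated as a Lie algebra. -/
theorem chi_L_finitelyGenerated
    (K : Type u) [Field K] (hchar : ringChar K ≠ 2)
    (g : Type v) [LieRing g] [LieAlgebra K g]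
    (hfg : ∃ s : Finset g, LieSubalgebra.lieSpan K g (s : Set g) = ⊤) :
    ∃ t : Finset (chi K g),
      ((LieSubalgebra.lieSpan K (chi K g) (t : Set (chi K g))) : Set (chi K g))
        = (chiL K g : Set (chi K g)) := by
  obtain ⟨s, hs⟩ := hfg
  have hfin := WeakComm.finite_generators (ι := chiιHom K g) (ψ := chiψHom K g) s.finite_toSet
  refine ⟨hfin.toFinset, ?_⟩
  rw [hfin.coe_toFinset]
  exact WeakComm.coe_lieSpan_generators (Ring.two_ne_zero hchar).isUnit
    (chiιHom_lie_chiψHom_self K g) (lieSpan_range_chiιHom_union_range_chiψHom_eq_top K g) hs
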